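/- Let {X_n} satisfy AIM(x_n) with separation sequence q_n and mixing coefficients α_n, suppose n·F̄(x_n) → τ > 0 as n → ∞ with F̄(x_n) > 0 for every n, and let (p_n) be a sequence of positive integers with p_n = o(n), n·α_n = o(p_n) and q_n = o(p_n). Set γ_n = (1/n) ∑_{j=1}^{n} P(M_{j,j+p_n} ≤ x_n | X_j > x_n). Then the sequence P(M_n ≤ x_n) converges if and only if lim_{n→∞} γ_n exists; and in that case, writing γ = lim_{n→∞} γ_n, one has γ ∈ [0,1] and P(M_n ≤ x_n) → e^{−τγ}. -/

import Mathlib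

/-!
Cut `{1, …, n}` into `k ≈ n / pₙ` blocks of length `pₙ`. Each block exceeds `xₙ` with
probability at most `pₙ F̄(xₙ) → 0`, and the AIM condition, paid for by dropping gaps of length
`qₙ` (probability `O(qₙ F̄(xₙ))` each), makes the blocks nearly independent, so
`P(Mₙ ≤ xₙ) ≈ ∏ₘ P(M(Bₘ) ≤ xₙ) ≈ exp (-∑ₘ P(M(Bₘ) > xₙ))`.
Splitting `{M(Bₘ) > xₙ}` by its last exceedance, and using AIM once more between consecutive
blocks, `∑ₘ P(M(Bₘ) > xₙ)` differs from `∑ⱼ P(Xⱼ > xₙ, M_{j,j+pₙ} ≤ xₙ) = n F̄(xₙ) γₙ` by `o(1)`.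
Hence `P(Mₙ ≤ xₙ) - exp (-τ γₙ) → 0`; as `γₙ ∈ [0, 1]` and `τ > 0`, the two sequences converge
together.
-/

open MeasureTheory Filter Finset Asymptotics

/-- Probability of an event as a real number. -/
noncomputable def pr {Ω : Type*} [MeasurableSpace Ω] (P : Measure Ω) (A : Set Ω) : ℝ :=
  (P A).toReal

/-- The event that `X i ≤ x` for every index `i` in the set `S`;
this is the event `{M(S) ≤ x}` where `M(S) = max {X i : i ∈ S}`. -/
def allLe {Ω : Type*} (X : ℕ → Ω → ℝ) (S : Set ℕ) (x : ℝ) : Set Ω :=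
  {ω | ∀ i ∈ S, X i ω ≤ x}

/-- `α` is a sequence of AIM mixing coefficients for `X` relative to thresholds `xs`
with separation sequence `q`: for any two intervals `I₁ = [a,b]`, `I₂ = [b+qₙ+1, c]`
contained in `{1,…,n}`, separated by `qₙ`, each of cardinality at least `qₙ`,
the maximum-based discrepancy is bounded by `α n`. -/
def AIMBound {Ω : Type*} [MeasurableSpace Ω] (P : Measure Ω) (X : ℕ → Ω → ℝ)
    (xs : ℕ → ℝ) (q : ℕ → ℕ) (α : ℕ → ℝ) : Prop :=
  ∀ n a b c : ℕ, 1 ≤ a → a ≤ b → b + q n + 1 ≤ c → c ≤ n →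
    q n ≤ b + 1 - a → q n ≤ c - (b + q n) →
    |pr P (allLe X (Set.Icc a b ∪ Set.Icc (b + q n + 1) c) (xs n)) -
      pr P (allLe X (Set.Icc a b) (xs n)) *
        pr P (allLe X (Set.Icc (b + q n + 1) c) (xs n))| ≤ α n

open scoped Topology

lemma abs_exp_neg_sub_exp_neg_le {a b : ℝ} (ha : 0 ≤ a) (hb : 0 ≤ b) :
    |Real.exp (-a) - Real.exp (-b)| ≤ |a - b| := by
  wlog hab : a ≤ b generalizing a b
  · rw [abs_sub_comm, abs_sub_comm a]
    exact this hb ha (le_of_not_ge hab)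
  have hexp : Real.exp (-b) = Real.exp (-a) * Real.exp (-(b - a)) := by
    rw [← Real.exp_add]; ring_nf
  have h1 : 1 - (b - a) ≤ Real.exp (-(b - a)) := Real.one_sub_le_exp_neg _
  have h2 : Real.exp (-a) ≤ 1 := Real.exp_le_one_iff.2 (by linarith)
  have h3 : Real.exp (-b) ≤ Real.exp (-a) := Real.exp_le_exp.2 (by linarith)
  rw [abs_of_nonneg (sub_nonneg.2 h3), abs_sub_comm, abs_of_nonneg (sub_nonneg.2 hab), hexp]
  nlinarith [Real.exp_pos (-a)]

lemma abs_prod_one_sub_sub_exp_le {ι : Type*} (s : Finset ι) {t : ι → ℝ} {ε : ℝ} (hε : ε ≤ 1)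
    (ht : ∀ i ∈ s, 0 ≤ t i ∧ t i ≤ ε) :
    |∏ i ∈ s, (1 - t i) - Real.exp (-∑ i ∈ s, t i)| ≤ ε * ∑ i ∈ s, t i := by
  classical
  induction s using Finset.induction_on with
  | empty => simp
  | insert x s hx ih =>
    obtain ⟨htx, htxε⟩ := ht x (Finset.mem_insert_self x s)
    have ih := ih fun i hi => ht i (Finset.mem_insert_of_mem hi)
    have hexp : Real.exp (-∑ i ∈ s, t i) ≤ 1 :=
      Real.exp_le_one_iff.2 (by linarith [Finset.sum_nonneg fun i hi =>
        (ht i (Finset.mem_insert_of_mem hi)).1])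
    have hx' : |1 - t x - Real.exp (-t x)| ≤ ε * t x :=
      calc |1 - t x - Real.exp (-t x)| = |Real.exp (-t x) - 1 - -t x| := by
            rw [abs_sub_comm]; congr 1; ring
        _ ≤ (-t x) ^ 2 :=
            Real.abs_exp_sub_one_sub_id_le (by rw [abs_neg, abs_of_nonneg htx]; linarith)
        _ ≤ ε * t x := by nlinarith
    rw [Finset.prod_insert hx, Finset.sum_insert hx, neg_add, Real.exp_add]
    calc |(1 - t x) * ∏ i ∈ s, (1 - t i) - Real.exp (-t x) * Real.exp (-∑ i ∈ s, t i)|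
        = |(1 - t x) * (∏ i ∈ s, (1 - t i) - Real.exp (-∑ i ∈ s, t i))
            + (1 - t x - Real.exp (-t x)) * Real.exp (-∑ i ∈ s, t i)| := by congr 1; ring
      _ ≤ 1 * (ε * ∑ i ∈ s, t i) + ε * t x * 1 := by
        refine (abs_add_le _ _).trans (add_le_add ?_ ?_) <;> rw [abs_mul]
        · exact mul_le_mul (by rw [abs_le]; constructor <;> linarith) ih (abs_nonneg _) zero_le_one
        · exact mul_le_mul hx' (by rw [abs_of_pos (Real.exp_pos _)]; exact hexp)
            (abs_nonneg _) (mul_nonneg (htx.trans htxε) htx)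
      _ = ε * (t x + ∑ i ∈ s, t i) := by ring

lemma sum_Ioc_mul_eq_sum_range_sum_Ioc {M : Type*} [AddCommMonoid M] (f : ℕ → M) (p k : ℕ) :
    ∑ j ∈ Finset.Ioc 0 (k * p), f j
      = ∑ m ∈ Finset.range k, ∑ j ∈ Finset.Ioc (m * p) (m * p + p), f j := by
  induction k with
  | zero => simp
  | succ k ih =>
    rw [Finset.sum_range_succ, ← ih, add_one_mul,
      Finset.sum_Ioc_consecutive f (Nat.zero_le _) (Nat.le_add_right _ _)]

lemma abs_sum_Ioc_sub_sum_Ioc_le {g : ℕ → ℝ} {w : ℝ} {m n : ℕ} (hmn : m ≤ n)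
    (hg : ∀ j ∈ Finset.Ioc m n, 0 ≤ g j ∧ g j ≤ w) :
    |∑ j ∈ Finset.Ioc 0 n, g j - ∑ j ∈ Finset.Ioc 0 m, g j| ≤ (n - m : ℕ) * w := by
  rw [← Finset.sum_Ioc_consecutive g (Nat.zero_le m) hmn, add_sub_cancel_left,
    abs_of_nonneg (Finset.sum_nonneg fun j hj => (hg j hj).1)]
  simpa using Finset.sum_le_card_nsmul _ _ _ fun j hj => (hg j hj).2

lemma exists_mul_add_two_mul_le (n : ℕ) {p : ℕ} (hp : 0 < p) :
    ∃ k, k * p ≤ n ∧ n < k * p + 2 * p ∧ ∀ m < k, m * p + 2 * p ≤ n := by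
  have h₁ := Nat.div_mul_le_self n p
  have h₂ := Nat.lt_div_mul_add (a := n) hp
  refine ⟨n / p - 1, ?_, ?_, fun m hm => ?_⟩
  · rw [Nat.sub_one_mul]; omega
  · rw [Nat.sub_one_mul]; omega
  · have := Nat.mul_le_mul_right p (show m + 2 ≤ n / p by omega)
    linarith

section Average

variable {ι : Type*} (s : Finset ι) {g : ι → ℝ} {w : ℝ}

lemma inv_card_mul_sum_div_mem_Icc (hg : ∀ i ∈ s, 0 ≤ g i ∧ g i ≤ w) :
    (#s : ℝ)⁻¹ * ∑ i ∈ s, g i / w ∈ Set.Icc (0 : ℝ) 1 := by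
  have h : ∀ i ∈ s, 0 ≤ g i / w ∧ g i / w ≤ 1 := fun i hi =>
    ⟨div_nonneg (hg i hi).1 ((hg i hi).1.trans (hg i hi).2),
      div_le_one_of_le₀ (hg i hi).2 ((hg i hi).1.trans (hg i hi).2)⟩
  have hsum : ∑ i ∈ s, g i / w ≤ #s := by
    simpa using Finset.sum_le_card_nsmul s _ 1 fun i hi => (h i hi).2
  exact ⟨mul_nonneg (inv_nonneg.2 (Nat.cast_nonneg _)) (Finset.sum_nonneg fun i hi => (h i hi).1),
    inv_mul_le_one_of_le₀ hsum (Nat.cast_nonneg _)⟩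

lemma sum_eq_card_mul_mul_inv_card_mul_sum_div (hg : ∀ i ∈ s, 0 ≤ g i ∧ g i ≤ w) :
    ∑ i ∈ s, g i = #s * w * ((#s : ℝ)⁻¹ * ∑ i ∈ s, g i / w) := by
  rcases eq_or_ne w 0 with rfl | hw
  · simp [Finset.sum_eq_zero fun i hi => le_antisymm (hg i hi).2 (hg i hi).1]
  rcases s.eq_empty_or_nonempty with rfl | hs
  · simp
  rw [← Finset.sum_div]
  field_simp [hs.card_pos.ne']

end Average

lemma tendsto_iff_of_tendsto_sub_exp {a γ : ℕ → ℝ} {τ : ℝ} (hτ : 0 < τ)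
    (hγ : ∀ n, γ n ∈ Set.Icc (0 : ℝ) 1)
    (h : Tendsto (fun n => a n - Real.exp (-(τ * γ n))) atTop (𝓝 0)) :
    ((∃ L, Tendsto a atTop (𝓝 L)) ↔ ∃ g, Tendsto γ atTop (𝓝 g)) ∧
      ∀ g, Tendsto γ atTop (𝓝 g) →
        g ∈ Set.Icc (0 : ℝ) 1 ∧ Tendsto a atTop (𝓝 (Real.exp (-(τ * g)))) := by
  have hlim (g : ℝ) (hg : Tendsto γ atTop (𝓝 g)) : Tendsto a atTop (𝓝 (Real.exp (-(τ * g)))) := by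
    simpa using h.add ((hg.const_mul τ).neg.rexp)
  refine ⟨⟨fun ⟨L, hL⟩ => ?_, fun ⟨g, hg⟩ => ⟨_, hlim g hg⟩⟩,
    fun g hg => ⟨isClosed_Icc.mem_of_tendsto hg (.of_forall hγ), hlim g hg⟩⟩
  have he : Tendsto (fun n => Real.exp (-(τ * γ n))) atTop (𝓝 L) := by
    simpa using hL.sub h
  have hL : 0 < L := (Real.exp_pos (-τ)).trans_le <| ge_of_tendsto' he fun n =>
    Real.exp_le_exp.2 (by nlinarith [(hγ n).2])
  refine ⟨Real.log L / -τ, (he.log hL.ne').div_const (-τ) |>.congr fun n => ?_⟩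
  rw [Real.log_exp]
  field_simp

lemma tendsto_exp_neg_mul_sub_exp_neg_mul {c γ : ℕ → ℝ} {τ : ℝ} (hτ : 0 ≤ τ)
    (hc : Tendsto c atTop (𝓝 τ)) (hc₀ : ∀ n, 0 ≤ c n) (hγ : ∀ n, γ n ∈ Set.Icc (0 : ℝ) 1) :
    Tendsto (fun n => Real.exp (-(c n * γ n)) - Real.exp (-(τ * γ n))) atTop (𝓝 0) := by
  refine squeeze_zero_norm (fun n => ?_) (by simpa using (hc.sub_const τ).abs)
  refine (abs_exp_neg_sub_exp_neg_le (mul_nonneg (hc₀ n) (hγ n).1)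
    (mul_nonneg hτ (hγ n).1)).trans ?_
  rw [← sub_mul, abs_mul, abs_of_nonneg (hγ n).1]
  exact mul_le_of_le_one_right (abs_nonneg _) (hγ n).2

lemma tendsto_mul_of_isLittleO_of_tendsto_natCast_mul {f w : ℕ → ℝ} {τ : ℝ}
    (hf : f =o[atTop] (fun n : ℕ => (n : ℝ))) (hw : Tendsto (fun n : ℕ => n * w n) atTop (𝓝 τ)) :
    Tendsto (fun n => f n * w n) atTop (𝓝 0) := by
  have h := hf.tendsto_div_nhds_zero.mul hw
  rw [zero_mul] at h
  refine h.congr' ?_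
  filter_upwards [eventually_ne_atTop 0] with n hn
  field_simp

lemma tendsto_block_error_nhds_zero {p q : ℕ → ℕ} {α w : ℕ → ℝ} {τ : ℝ} (hppos : ∀ n, 1 ≤ p n)
    (hw : Tendsto (fun n : ℕ => n * w n) atTop (𝓝 τ))
    (hp : (fun n : ℕ => (p n : ℝ)) =o[atTop] (fun n : ℕ => (n : ℝ)))
    (hnα : (fun n : ℕ => (n : ℝ) * α n) =o[atTop] (fun n : ℕ => (p n : ℝ)))
    (hqp : (fun n : ℕ => (q n : ℝ)) =o[atTop] (fun n : ℕ => (p n : ℝ))) :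
    Tendsto (fun n : ℕ => 4 * (p n * w n)
      + n / p n * (2 * α n + 4 * q n * w n + 2 * (p n * w n) ^ 2)) atTop (𝓝 0) := by
  have hpw := tendsto_mul_of_isLittleO_of_tendsto_natCast_mul hp hw
  have h := ((hpw.const_mul 4).add (hnα.tendsto_div_nhds_zero.const_mul 2)).add
    (((hqp.tendsto_div_nhds_zero.mul hw).const_mul 4).add ((hpw.mul hw).const_mul 2))
  simp only [mul_zero, zero_mul, add_zero] at h
  refine h.congr fun n => ?_
  have : (p n : ℝ) ≠ 0 := by have := hppos n; positivity
  field_simp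
  ring

section Events

variable {Ω : Type*} {X : ℕ → Ω → ℝ}

lemma allLe_anti {S T : Set ℕ} (h : S ⊆ T) (x : ℝ) : allLe X T x ⊆ allLe X S x :=
  fun _ hω i hi => hω i (h hi)

lemma allLe_insert (i : ℕ) (S : Set ℕ) (x : ℝ) :
    allLe X (insert i S) x = {ω | X i ω ≤ x} ∩ allLe X S x := by
  ext ω
  simp [allLe]

variable [MeasurableSpace Ω] {P : Measure Ω} {u w : ℝ}

lemma measurableSet_allLe (hX : ∀ i, Measurable (X i)) (S : Set ℕ) (x : ℝ) :
    MeasurableSet (allLe X S x) := by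
  have h : allLe X S x = ⋂ i ∈ S, {ω | X i ω ≤ x} := by ext ω; simp [allLe]
  rw [h]
  exact .biInter S.to_countable fun i _ => measurableSet_le (hX i) measurable_const

lemma abs_measureReal_allLe_sub_le [IsFiniteMeasure P] (hX : ∀ i, Measurable (X i))
    {S T : Set ℕ} {D : Finset ℕ} (hST : S ⊆ T) (hTD : T ⊆ S ∪ D)
    (hw : ∀ i ∈ D, P.real {ω | u < X i ω} ≤ w) :
    |P.real (allLe X T u) - P.real (allLe X S u)| ≤ #D * w := by
  have hsub : allLe X S u \ allLe X T u ⊆ ⋃ i ∈ D, {ω | u < X i ω} := by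
    rintro ω ⟨hS, hT⟩
    simp only [allLe, Set.mem_ofPred_eq, not_forall, not_le] at hT
    obtain ⟨i, hiT, hi⟩ := hT
    have hiD : i ∈ D := ((hTD hiT).resolve_left fun hiS => (hS i hiS).not_gt hi)
    exact Set.mem_biUnion hiD hi
  rw [abs_sub_comm, abs_of_nonneg (sub_nonneg.2 (measureReal_mono (allLe_anti hST u))),
    ← measureReal_sdiff (allLe_anti hST u) (measurableSet_allLe hX T u)]
  calc P.real (allLe X S u \ allLe X T u)
      ≤ P.real (⋃ i ∈ D, {ω | u < X i ω}) := measureReal_mono hsub (measure_ne_top _ _)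
    _ ≤ ∑ i ∈ D, P.real {ω | u < X i ω} := measureReal_biUnion_finset_le D _
    _ ≤ ∑ _i ∈ D, w := Finset.sum_le_sum hw
    _ = #D * w := by rw [Finset.sum_const, nsmul_eq_mul]

lemma abs_measureReal_allLe_Icc_sub_le [IsFiniteMeasure P] (hX : ∀ i, Measurable (X i))
    (hw : ∀ i, 1 ≤ i → P.real {ω | u < X i ω} ≤ w) {m n : ℕ} (hmn : m ≤ n) :
    |P.real (allLe X (Set.Icc 1 n) u) - P.real (allLe X (Set.Icc 1 m) u)| ≤ (n - m : ℕ) * w := by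
  simpa using abs_measureReal_allLe_sub_le hX (Set.Icc_subset_Icc_right hmn)
    (D := Finset.Ioc m n) (fun i hi => by simp at hi ⊢; omega)
    fun i hi => hw i (by simp only [Finset.mem_Ioc] at hi; omega)

lemma measureReal_lt_inter_allLe [IsFiniteMeasure P] (hX : ∀ i, Measurable (X i))
    {i e : ℕ} (hie : i ≤ e) :
    P.real ({ω | u < X i ω} ∩ allLe X (Set.Icc (i + 1) e) u)
      = P.real (allLe X (Set.Icc (i + 1) e) u) - P.real (allLe X (Set.Icc i e) u) := by
  have hsub : allLe X (Set.Icc i e) u ⊆ allLe X (Set.Icc (i + 1) e) u :=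
    allLe_anti (Set.Icc_subset_Icc_left i.le_succ) u
  rw [← measureReal_sdiff hsub (measurableSet_allLe hX _ u),
    ← Set.insert_Icc_add_one_left_eq_Icc hie, allLe_insert]
  congr 1
  ext ω
  simp only [Set.mem_inter_iff, Set.mem_sdiff, Set.mem_ofPred_eq, not_and]
  exact ⟨fun ⟨hi, hω⟩ => ⟨hω, fun hi' => absurd hi' (not_le.2 hi)⟩,
    fun ⟨hω, hi⟩ => ⟨not_le.1 fun hi' => hi hi' hω, hω⟩⟩

/-- The event `{M_{L,e} ≤ u < M_{K,e}}` split according to its last exceedance, which lies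
in `(K, L]`. -/
lemma sum_measureReal_lt_inter_allLe [IsFiniteMeasure P] (hX : ∀ i, Measurable (X i))
    {K L e : ℕ} (hKL : K ≤ L) (hLe : L ≤ e) :
    ∑ j ∈ Finset.Ioc K L, P.real ({ω | u < X j ω} ∩ allLe X (Set.Icc (j + 1) e) u)
      = P.real (allLe X (Set.Icc (L + 1) e) u) - P.real (allLe X (Set.Icc (K + 1) e) u) := by
  induction L, hKL using Nat.le_induction with
  | base => simp
  | succ L hKL ih =>
    rw [Finset.sum_Ioc_succ_top hKL, ih (by omega), measureReal_lt_inter_allLe hX hLe]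
    ring

variable [IsProbabilityMeasure P]

lemma one_sub_measureReal_allLe_le (hX : ∀ i, Measurable (X i))
    (hw : ∀ i, 1 ≤ i → P.real {ω | u < X i ω} ≤ w) (K p : ℕ) :
    1 - P.real (allLe X (Set.Icc (K + 1) (K + p)) u) ≤ p * w := by
  have h := abs_measureReal_allLe_sub_le hX (Set.empty_subset (Set.Icc (K + 1) (K + p)))
    (D := Finset.Ioc K (K + p)) (fun i hi => by simp_all)
    fun i hi => hw i (by simp only [Finset.mem_Ioc] at hi; omega)
  simp only [allLe, Set.mem_empty_iff_false, false_imp_iff, implies_true, Set.ofPred_true,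
    probReal_univ, Nat.card_Ioc, add_tsub_cancel_left, abs_sub_comm _ (1 : ℝ)] at h
  exact (le_abs_self _).trans h

lemma sum_measureReal_lt_inter_allLe_le (hX : ∀ i, Measurable (X i)) (K p : ℕ) :
    ∑ j ∈ Finset.Ioc K (K + p), P.real ({ω | u < X j ω} ∩ allLe X (Set.Icc (j + 1) (j + p)) u)
      ≤ 1 - P.real (allLe X (Set.Icc (K + 1) (K + p)) u) := by
  calc _ ≤ ∑ j ∈ Finset.Ioc K (K + p),
        P.real ({ω | u < X j ω} ∩ allLe X (Set.Icc (j + 1) (K + p)) u) := by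
        refine Finset.sum_le_sum fun j hj => measureReal_mono ?_
        simp only [Finset.mem_Ioc] at hj
        exact Set.inter_subset_inter_right _ (allLe_anti (Set.Icc_subset_Icc_right (by omega)) u)
    _ = 1 - P.real (allLe X (Set.Icc (K + 1) (K + p)) u) := by
        rw [sum_measureReal_lt_inter_allLe hX (Nat.le_add_right K p) le_rfl]
        simp [allLe]

end Events

section Blocks

variable {Ω : Type*} [MeasurableSpace Ω] {P : Measure Ω} [IsProbabilityMeasure P]
  {X : ℕ → Ω → ℝ} {xs : ℕ → ℝ} {q : ℕ → ℕ} {α : ℕ → ℝ} {n p : ℕ} {w : ℝ}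

/-- `AIMBound` applies to `[a, b]` and `[b + q n + 1, c]`; putting the gap back costs `q n * w`
on each side. -/
lemma abs_measureReal_allLe_sub_mul_le (hX : ∀ i, Measurable (X i))
    (hbd : AIMBound P X xs q α) (hw : ∀ i, 1 ≤ i → P.real {ω | xs n < X i ω} ≤ w) {a b c : ℕ}
    (ha : 1 ≤ a) (hab : a + q n ≤ b) (hbc : b + 2 * q n < c) (hcn : c ≤ n) :
    |P.real (allLe X (Set.Icc a c) (xs n))
      - P.real (allLe X (Set.Icc a b) (xs n)) * P.real (allLe X (Set.Icc (b + 1) c) (xs n))|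
      ≤ α n + 2 * q n * w := by
  have hgap {S T : Set ℕ} (hST : S ⊆ T) (hTD : T ⊆ S ∪ ↑(Finset.Ioc b (b + q n))) :
      |P.real (allLe X T (xs n)) - P.real (allLe X S (xs n))| ≤ q n * w := by
    simpa using abs_measureReal_allLe_sub_le hX hST hTD
      fun i hi => hw i (by simp only [Finset.mem_Ioc] at hi; omega)
  have h₁ := hgap (S := Set.Icc a b ∪ Set.Icc (b + q n + 1) c) (T := Set.Icc a c)
    (Set.union_subset (Set.Icc_subset_Icc_right (by omega)) (Set.Icc_subset_Icc_left (by omega)))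
    fun i hi => by
      simp only [Set.mem_Icc, Set.mem_union, Finset.coe_Ioc, Set.mem_Ioc] at hi ⊢; omega
  have h₂ : |P.real (allLe X (Set.Icc a b ∪ Set.Icc (b + q n + 1) c) (xs n))
      - P.real (allLe X (Set.Icc a b) (xs n)) * P.real (allLe X (Set.Icc (b + q n + 1) c) (xs n))|
      ≤ α n := hbd n a b c ha (by omega) (by omega) hcn (by omega) (by omega)
  have h₃ := hgap (S := Set.Icc (b + q n + 1) c) (T := Set.Icc (b + 1) c)
    (Set.Icc_subset_Icc_left (by omega))
    fun i hi => by
      simp only [Set.mem_Icc, Set.mem_union, Finset.coe_Ioc, Set.mem_Ioc] at hi ⊢; omega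
  have hA : |P.real (allLe X (Set.Icc a b) (xs n))| ≤ 1 := by
    rw [abs_of_nonneg measureReal_nonneg]; exact measureReal_le_one
  set U := P.real (allLe X (Set.Icc a b ∪ Set.Icc (b + q n + 1) c) (xs n))
  set A₁ := P.real (allLe X (Set.Icc a b) (xs n))
  set A₂ := P.real (allLe X (Set.Icc (b + q n + 1) c) (xs n))
  calc _ = |(P.real (allLe X (Set.Icc a c) (xs n)) - U) + (U - A₁ * A₂)
        + A₁ * (A₂ - P.real (allLe X (Set.Icc (b + 1) c) (xs n)))| := by congr 1; ring
    _ ≤ q n * w + α n + 1 * (q n * w) := by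
      refine (abs_add_three _ _ _).trans (add_le_add (add_le_add h₁ h₂) ?_)
      rw [abs_mul, abs_sub_comm]
      exact mul_le_mul hA h₃ (abs_nonneg _) zero_le_one
    _ = α n + 2 * q n * w := by ring

lemma abs_measureReal_allLe_sub_prod_le (hX : ∀ i, Measurable (X i))
    (hbd : AIMBound P X xs q α) (hw : ∀ i, 1 ≤ i → P.real {ω | xs n < X i ω} ≤ w)
    (hα : 0 ≤ α n) (hw₀ : 0 ≤ w) (hqp : 2 * q n < p) {k : ℕ} (hk : k * p ≤ n) :
    |P.real (allLe X (Set.Icc 1 (k * p)) (xs n))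
      - ∏ m ∈ Finset.range k, P.real (allLe X (Set.Icc (m * p + 1) (m * p + p)) (xs n))|
      ≤ k * (α n + 2 * q n * w) := by
  induction k with
  | zero => simp [allLe]
  | succ k ih =>
    rw [Finset.prod_range_succ, show (k + 1) * p = k * p + p by ring, Nat.cast_succ]
    rw [show (k + 1) * p = k * p + p by ring] at hk
    rcases Nat.eq_zero_or_pos k with rfl | hk₀
    · simp only [zero_mul, zero_add, Finset.range_zero, Finset.prod_empty, one_mul, sub_self,
        abs_zero]
      positivity
    have hdec := abs_measureReal_allLe_sub_mul_le hX hbd hw (a := 1) (b := k * p) (c := k * p + p)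
      le_rfl (by nlinarith) (by omega) hk
    set a := P.real (allLe X (Set.Icc (k * p + 1) (k * p + p)) (xs n))
    have ha : |a| ≤ 1 := by rw [abs_of_nonneg measureReal_nonneg]; exact measureReal_le_one
    calc _ = |(P.real (allLe X (Set.Icc 1 (k * p + p)) (xs n))
            - P.real (allLe X (Set.Icc 1 (k * p)) (xs n)) * a)
          + (P.real (allLe X (Set.Icc 1 (k * p)) (xs n))
            - ∏ m ∈ Finset.range k, P.real (allLe X (Set.Icc (m * p + 1) (m * p + p)) (xs n))) * a|
          := by congr 1; ring
      _ ≤ (α n + 2 * q n * w) + k * (α n + 2 * q n * w) * 1 := by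
        refine (abs_add_le _ _).trans (add_le_add hdec ?_)
        rw [abs_mul]
        exact mul_le_mul (ih (by omega)) ha (abs_nonneg _) (by positivity)
      _ = (k + 1) * (α n + 2 * q n * w) := by ring

/-- The left side is at most the probability that both `(K, K + p]` and `(K + p, K + 2p]` contain
an exceedance, which decoupling bounds by about `P(M_{K,K+p} > u) P(M_{K+p,K+2p} > u) ≤ (p w)²`. -/
lemma one_sub_measureReal_allLe_sub_sum_le (hX : ∀ i, Measurable (X i))
    (hbd : AIMBound P X xs q α) (hw : ∀ i, 1 ≤ i → P.real {ω | xs n < X i ω} ≤ w)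
    (hqp : 2 * q n < p) {K : ℕ} (hK : K + 2 * p ≤ n) :
    1 - P.real (allLe X (Set.Icc (K + 1) (K + p)) (xs n))
      - ∑ j ∈ Finset.Ioc K (K + p),
          P.real ({ω | xs n < X j ω} ∩ allLe X (Set.Icc (j + 1) (j + p)) (xs n))
      ≤ (p * w) ^ 2 + (α n + 2 * q n * w) := by
  have hdec := abs_measureReal_allLe_sub_mul_le hX hbd hw (a := K + 1) (b := K + p)
    (c := K + 2 * p) (by omega) (by omega) (by omega) hK
  set a₁ := P.real (allLe X (Set.Icc (K + 1) (K + p)) (xs n))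
  set a₂ := P.real (allLe X (Set.Icc (K + p + 1) (K + 2 * p)) (xs n))
  have hsum : a₂ - P.real (allLe X (Set.Icc (K + 1) (K + 2 * p)) (xs n))
      ≤ ∑ j ∈ Finset.Ioc K (K + p),
          P.real ({ω | xs n < X j ω} ∩ allLe X (Set.Icc (j + 1) (j + p)) (xs n)) := by
    rw [← sum_measureReal_lt_inter_allLe hX (Nat.le_add_right K p) (by omega)]
    refine Finset.sum_le_sum fun j hj => measureReal_mono ?_
    simp only [Finset.mem_Ioc] at hj
    exact Set.inter_subset_inter_right _ (allLe_anti (Set.Icc_subset_Icc_right (by omega)) _)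
  have h₁ : 1 - a₁ ≤ p * w := one_sub_measureReal_allLe_le hX hw K p
  have h₂ : 1 - a₂ ≤ p * w := by
    have h := one_sub_measureReal_allLe_le hX hw (K + p) p
    rwa [show K + p + p = K + 2 * p by ring] at h
  have h₁₂ : (1 - a₁) * (1 - a₂) ≤ (p * w) ^ 2 := by
    rw [sq]
    exact mul_le_mul h₁ h₂ (sub_nonneg.2 measureReal_le_one)
      ((sub_nonneg.2 measureReal_le_one).trans h₁)
  linarith [(abs_le.1 hdec).2]

lemma abs_sum_one_sub_measureReal_allLe_sub_sum_le (hX : ∀ i, Measurable (X i))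
    (hbd : AIMBound P X xs q α) (hw : ∀ i, 1 ≤ i → P.real {ω | xs n < X i ω} ≤ w)
    (hqp : 2 * q n < p) {k : ℕ} (hk : ∀ m < k, m * p + 2 * p ≤ n) :
    |∑ m ∈ Finset.range k, (1 - P.real (allLe X (Set.Icc (m * p + 1) (m * p + p)) (xs n)))
      - ∑ j ∈ Finset.Ioc 0 (k * p),
          P.real ({ω | xs n < X j ω} ∩ allLe X (Set.Icc (j + 1) (j + p)) (xs n))|
      ≤ k * ((p * w) ^ 2 + (α n + 2 * q n * w)) := by
  rw [sum_Ioc_mul_eq_sum_range_sum_Ioc, ← Finset.sum_sub_distrib]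
  have hblock := fun m => sum_measureReal_lt_inter_allLe_le (P := P) hX (m * p) p (u := xs n)
  rw [abs_of_nonneg (Finset.sum_nonneg fun m _ => sub_nonneg.2 (hblock m))]
  calc _ ≤ ∑ _m ∈ Finset.range k, ((p * w) ^ 2 + (α n + 2 * q n * w)) :=
        Finset.sum_le_sum fun m hm =>
          one_sub_measureReal_allLe_sub_sum_le hX hbd hw hqp (hk m (Finset.mem_range.1 hm))
    _ = k * ((p * w) ^ 2 + (α n + 2 * q n * w)) := by
        rw [Finset.sum_const, Finset.card_range, nsmul_eq_mul]

theorem abs_measureReal_allLe_sub_exp_le (hX : ∀ i, Measurable (X i))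
    (hbd : AIMBound P X xs q α) (hw : ∀ i, 1 ≤ i → P.real {ω | xs n < X i ω} ≤ w)
    (hα : 0 ≤ α n) (hqp : 2 * q n < p) (hpw : p * w ≤ 1) :
    |P.real (allLe X (Set.Icc 1 n) (xs n)) - Real.exp (-∑ j ∈ Finset.Icc 1 n,
        P.real ({ω | xs n < X j ω} ∩ allLe X (Set.Icc (j + 1) (j + p)) (xs n)))|
      ≤ 4 * (p * w) + n / p * (2 * α n + 4 * q n * w + 2 * (p * w) ^ 2) := by
  rw [show Finset.Icc 1 n = Finset.Ioc 0 n from Finset.Icc_add_one_left_eq_Ioc 0 n]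
  have hw₀ : 0 ≤ w := measureReal_nonneg.trans (hw 1 le_rfl)
  have hp : 0 < p := by omega
  obtain ⟨k, hkn, hnk, hk⟩ := exists_mul_add_two_mul_le n hp
  have hD := abs_measureReal_allLe_sub_prod_le hX hbd hw hα hw₀ hqp hkn
  have hTG' := abs_sum_one_sub_measureReal_allLe_sub_sum_le hX hbd hw hqp hk
  set a := fun m => P.real (allLe X (Set.Icc (m * p + 1) (m * p + p)) (xs n))
  set T := ∑ m ∈ Finset.range k, (1 - a m)
  set G := ∑ j ∈ Finset.Ioc 0 n,
    P.real ({ω | xs n < X j ω} ∩ allLe X (Set.Icc (j + 1) (j + p)) (xs n))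
  have htail : (n - k * p : ℕ) * w ≤ 2 * (p * w) := by
    rw [← mul_assoc]; gcongr; norm_cast; omega
  have hA := (abs_measureReal_allLe_Icc_sub_le hX hw hkn).trans htail
  have ht : ∀ m ∈ Finset.range k, 0 ≤ 1 - a m ∧ 1 - a m ≤ p * w := fun m _ =>
    ⟨sub_nonneg.2 measureReal_le_one, one_sub_measureReal_allLe_le hX hw (m * p) p⟩
  have hexp : |∏ m ∈ Finset.range k, a m - Real.exp (-T)| ≤ p * w * (k * (p * w)) := by
    have h := abs_prod_one_sub_sub_exp_le (Finset.range k) hpw ht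
    have hT := Finset.sum_le_card_nsmul _ _ _ fun m hm => (ht m hm).2
    rw [Finset.card_range, nsmul_eq_mul] at hT
    simp only [sub_sub_cancel] at h
    exact h.trans (by gcongr)
  have hTG : |T - G| ≤ k * ((p * w) ^ 2 + (α n + 2 * q n * w)) + 2 * (p * w) := by
    refine (abs_sub_le _ _ _).trans (add_le_add hTG' ?_)
    rw [abs_sub_comm]
    exact (abs_sum_Ioc_sub_sum_Ioc_le hkn fun j hj => ⟨measureReal_nonneg,
      (measureReal_mono Set.inter_subset_left).trans
        (hw j (by simp only [Finset.mem_Ioc] at hj; omega))⟩).trans htail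
  have hlip := abs_exp_neg_sub_exp_neg_le (a := T) (b := G)
    (Finset.sum_nonneg fun m hm => (ht m hm).1)
    (Finset.sum_nonneg fun j _ => measureReal_nonneg : 0 ≤ G)
  have hk' : (k : ℝ) ≤ n / p := by
    rw [le_div_iff₀ (by positivity)]; exact_mod_cast hkn
  set D := P.real (allLe X (Set.Icc 1 (k * p)) (xs n))
  have h₁ := abs_sub_le (P.real (allLe X (Set.Icc 1 n) (xs n))) D (Real.exp (-G))
  have h₂ := abs_sub_le D (∏ m ∈ Finset.range k, a m) (Real.exp (-G))
  have h₃ := abs_sub_le (∏ m ∈ Finset.range k, a m) (Real.exp (-T)) (Real.exp (-G))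
  calc _ ≤ 4 * (p * w) + k * (2 * α n + 4 * q n * w + 2 * (p * w) ^ 2) := by
        linarith
    _ ≤ 4 * (p * w) + n / p * (2 * α n + 4 * q n * w + 2 * (p * w) ^ 2) := by
        gcongr

end Blocks

theorem tendsto_measureReal_allLe_sub_exp {Ω : Type*} [MeasurableSpace Ω] {P : Measure Ω}
    [IsProbabilityMeasure P] {X : ℕ → Ω → ℝ} {xs : ℕ → ℝ} {q p : ℕ → ℕ} {α w : ℕ → ℝ} {τ : ℝ}
    (hX : ∀ i, Measurable (X i)) (hbd : AIMBound P X xs q α)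
    (hw : ∀ n i, 1 ≤ i → P.real {ω | xs n < X i ω} ≤ w n)
    (hnw : Tendsto (fun n : ℕ => (n : ℝ) * w n) atTop (𝓝 τ)) (hppos : ∀ n, 1 ≤ p n)
    (hp : (fun n : ℕ => (p n : ℝ)) =o[atTop] (fun n : ℕ => (n : ℝ)))
    (hnα : (fun n : ℕ => (n : ℝ) * α n) =o[atTop] (fun n : ℕ => (p n : ℝ)))
    (hqp : (fun n : ℕ => (q n : ℝ)) =o[atTop] (fun n : ℕ => (p n : ℝ))) :
    Tendsto (fun n => P.real (allLe X (Set.Icc 1 n) (xs n)) - Real.exp (-∑ j ∈ Finset.Icc 1 n,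
      P.real ({ω | xs n < X j ω} ∩ allLe X (Set.Icc (j + 1) (j + p n)) (xs n)))) atTop (𝓝 0) := by
  have hpw := tendsto_mul_of_isLittleO_of_tendsto_natCast_mul hp hnw
  have h2q : ∀ᶠ n in atTop, 2 * q n < p n := by
    filter_upwards [hqp.bound (by norm_num : (0 : ℝ) < 1 / 3)] with n hn
    simp only [Real.norm_natCast] at hn
    have h3 : 3 * q n ≤ p n := by exact_mod_cast (by linarith : (3 * q n : ℝ) ≤ p n)
    have := hppos n
    omega
  have hα : ∀ᶠ n in atTop, 0 ≤ α n := by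
    filter_upwards [h2q, hp.bound (by norm_num : (0 : ℝ) < 1 / 2)] with n hq hn
    simp only [Real.norm_natCast] at hn
    have h2p : 2 * p n ≤ n := by exact_mod_cast (by linarith : (2 * p n : ℝ) ≤ n)
    exact (abs_nonneg _).trans (hbd n 1 (p n) (2 * p n) le_rfl (hppos n) (by omega) h2p
      (by omega) (by omega))
  refine squeeze_zero_norm' ?_ (tendsto_block_error_nhds_zero hppos hnw hp hnα hqp)
  filter_upwards [h2q, hα, hpw.eventually (eventually_le_nhds zero_lt_one)] with n hq hα hpw
  exact abs_measureReal_allLe_sub_exp_le hX hbd (hw n) hα hq hpw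

theorem stmt4_general {Ω : Type*} [MeasurableSpace Ω] (P : Measure Ω) [IsProbabilityMeasure P]
    (X : ℕ → Ω → ℝ) (F : ℝ → ℝ) (xs : ℕ → ℝ) (q : ℕ → ℕ) (α : ℕ → ℝ) (p : ℕ → ℕ)
    (τ : ℝ) (hτ : 0 < τ)
    (hmeas : ∀ i, Measurable (X i))
    (hF : ∀ i, 1 ≤ i → ∀ t : ℝ, pr P {ω | X i ω ≤ t} = F t)
    (hbd : AIMBound P X xs q α)
    (hFbar : Tendsto (fun n : ℕ => (n : ℝ) * (1 - F (xs n))) atTop (nhds τ))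
    (hppos : ∀ m, 1 ≤ p m)
    (hp : (fun n : ℕ => (p n : ℝ)) =o[atTop] (fun n : ℕ => (n : ℝ)))
    (hnα : (fun n : ℕ => (n : ℝ) * α n) =o[atTop] (fun n : ℕ => (p n : ℝ)))
    (hqp : (fun n : ℕ => (q n : ℝ)) =o[atTop] (fun n : ℕ => (p n : ℝ)))
    (γseq : ℕ → ℝ)
    (hγ : ∀ n : ℕ, γseq n = (n : ℝ)⁻¹ * ∑ j ∈ Finset.Icc 1 n,
      pr P ({ω | xs n < X j ω} ∩ allLe X (Set.Icc (j + 1) (j + p n)) (xs n)) /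
        pr P {ω | xs n < X j ω}) :
    ((∃ L : ℝ, Tendsto (fun n => pr P (allLe X (Set.Icc 1 n) (xs n))) atTop (nhds L)) ↔
      (∃ γ : ℝ, Tendsto γseq atTop (nhds γ))) ∧
    (∀ γ : ℝ, Tendsto γseq atTop (nhds γ) →
      γ ∈ Set.Icc (0 : ℝ) 1 ∧
      Tendsto (fun n => pr P (allLe X (Set.Icc 1 n) (xs n))) atTop
        (nhds (Real.exp (-(τ * γ))))) := by
  have hpr (A : Set Ω) : pr P A = P.real A := rfl
  simp only [hpr] at hF hγ ⊢
  have hw (n i : ℕ) (hi : 1 ≤ i) : P.real {ω | xs n < X i ω} = 1 - F (xs n) := by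
    rw [← hF i hi, ← probReal_univ (μ := P), ← measureReal_compl
      (measurableSet_le (hmeas i) measurable_const)]
    congr 1; ext ω; simp
  have hg (n : ℕ) : ∀ j ∈ Finset.Icc 1 n,
      0 ≤ P.real ({ω | xs n < X j ω} ∩ allLe X (Set.Icc (j + 1) (j + p n)) (xs n)) ∧
      P.real ({ω | xs n < X j ω} ∩ allLe X (Set.Icc (j + 1) (j + p n)) (xs n)) ≤ 1 - F (xs n) :=
    fun j hj => ⟨measureReal_nonneg, (measureReal_mono Set.inter_subset_left).trans_eq
      (hw n j (Finset.mem_Icc.1 hj).1)⟩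
  have hγw (n : ℕ) : γseq n = (n : ℝ)⁻¹ * ∑ j ∈ Finset.Icc 1 n,
      P.real ({ω | xs n < X j ω} ∩ allLe X (Set.Icc (j + 1) (j + p n)) (xs n))
        / (1 - F (xs n)) := by
    rw [hγ n]
    exact congrArg _ (Finset.sum_congr rfl fun j hj => by rw [hw n j (Finset.mem_Icc.1 hj).1])
  have hγ01 (n : ℕ) : γseq n ∈ Set.Icc (0 : ℝ) 1 := by
    simpa [hγw n] using inv_card_mul_sum_div_mem_Icc _ (hg n)
  have hG (n : ℕ) : ∑ j ∈ Finset.Icc 1 n,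
      P.real ({ω | xs n < X j ω} ∩ allLe X (Set.Icc (j + 1) (j + p n)) (xs n))
        = n * (1 - F (xs n)) * γseq n := by
    simpa [hγw n] using sum_eq_card_mul_mul_inv_card_mul_sum_div _ (hg n)
  have hmain := tendsto_measureReal_allLe_sub_exp hmeas hbd (fun n i hi => (hw n i hi).le)
    hFbar hppos hp hnα hqp
  have hexp := tendsto_exp_neg_mul_sub_exp_neg_mul hτ.le hFbar
    (fun n => mul_nonneg n.cast_nonneg ((hw n 1 le_rfl).symm.trans_ge measureReal_nonneg)) hγ01
  exact tendsto_iff_of_tendsto_sub_exp hτ hγ01 (by simpa [hG] using hmain.add hexp)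

/-- Corollary EasyCor: under the assumptions of Lemma lemOB (with
`F̄(xₙ) > 0` for all `n`), writing `γₙ = (1/n) ∑_{j=1}^n P(M_{j,j+pₙ} ≤ xₙ | X_j > xₙ)`,
the sequence `P(Mₙ ≤ xₙ)` converges iff `lim γₙ` exists, in which case the limit
`γ` lies in `[0,1]` and `P(Mₙ ≤ xₙ) → e^{−τγ}`. -/
theorem stmt4 {Ω : Type*} [MeasurableSpace Ω] (P : Measure Ω) [IsProbabilityMeasure P]
    (X : ℕ → Ω → ℝ) (F : ℝ → ℝ) (xs : ℕ → ℝ) (q : ℕ → ℕ) (α : ℕ → ℝ) (p : ℕ → ℕ)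
    (τ : ℝ) (hτ : 0 < τ)
    (hmeas : ∀ i, Measurable (X i))
    (hF : ∀ i, 1 ≤ i → ∀ t : ℝ, pr P {ω | X i ω ≤ t} = F t)
    (hFbarpos : ∀ n, 0 < 1 - F (xs n))
    (hqpos : ∀ m, 1 ≤ q m)
    (hq : (fun n : ℕ => (q n : ℝ)) =o[atTop] (fun n : ℕ => (n : ℝ)))
    (hα : Tendsto α atTop (nhds 0))
    (hbd : AIMBound P X xs q α)
    (hFbar : Tendsto (fun n : ℕ => (n : ℝ) * (1 - F (xs n))) atTop (nhds τ))
    (hppos : ∀ m, 1 ≤ p m)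
    (hp : (fun n : ℕ => (p n : ℝ)) =o[atTop] (fun n : ℕ => (n : ℝ)))
    (hnα : (fun n : ℕ => (n : ℝ) * α n) =o[atTop] (fun n : ℕ => (p n : ℝ)))
    (hqp : (fun n : ℕ => (q n : ℝ)) =o[atTop] (fun n : ℕ => (p n : ℝ)))
    (γseq : ℕ → ℝ)
    (hγ : ∀ n : ℕ, γseq n = (n : ℝ)⁻¹ * ∑ j ∈ Finset.Icc 1 n,
      pr P ({ω | xs n < X j ω} ∩ allLe X (Set.Icc (j + 1) (j + p n)) (xs n)) /
        pr P {ω | xs n < X j ω}) :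
    ((∃ L : ℝ, Tendsto (fun n => pr P (allLe X (Set.Icc 1 n) (xs n))) atTop (nhds L)) ↔
      (∃ γ : ℝ, Tendsto γseq atTop (nhds γ))) ∧
    (∀ γ : ℝ, Tendsto γseq atTop (nhds γ) →
      γ ∈ Set.Icc (0 : ℝ) 1 ∧
      Tendsto (fun n => pr P (allLe X (Set.Icc 1 n) (xs n))) atTop
        (nhds (Real.exp (-(τ * γ))))) :=
  stmt4_general P X F xs q α p τ hτ hmeas hF hbd hFbar hppos hp hnα hqp γseq hγ
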